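/- arXiv:2405.17639 — 3 statements merged into one kernel-verified Lean document; each statement's English description precedes it below -/
import Mathlib

section
/- Let k = ⌊n/2⌋, X = [n], X_1 = [k], X_2 = [n] \ [k]. Let A_1, ..., A_m be all k-element subsets of [n] (so m = binom(n,k)) and B_i = [n] \ A_i. Then (A_i, B_i), i ∈ [m], is a Bollobás system and ∑_{i=1}^m (binom(k, |A_i ∩ X_1|) · binom(n-k, |A_i ∩ X_2|))^{-1} = 1 + k. -/
open Finset

theorem bollobas_two_parts_tight (n : ℕ)
    (A : Fin (n.choose (n / 2)) → Finset (Fin n))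
    (hinj : Function.Injective A)
    (hcard : ∀ i, (A i).card = n / 2) :
    (∀ i j, A i ∩ (A j)ᶜ = ∅ ↔ i = j) ∧
      ∑ i, (((n / 2).choose ((A i ∩ Finset.univ.filter (fun x : Fin n => (x : ℕ) < n / 2)).card) : ℝ) *
          ((n - n / 2).choose ((A i ∩ Finset.univ.filter (fun x : Fin n => ¬ (x : ℕ) < n / 2)).card) : ℝ))⁻¹
        = 1 + (n / 2 : ℕ) := by
  constructor
  · intro i j
    constructor
    · intro h
      apply hinj
      apply Finset.eq_of_subset_of_card_le
      · intro x hx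
        by_contra hxj
        have hmem : x ∈ A i ∩ (A j)ᶜ := by
          simp only [Finset.mem_inter, Finset.mem_compl]
          exact ⟨hx, hxj⟩
        rw [h] at hmem
        exact absurd hmem (Finset.notMem_empty x)
      · rw [hcard, hcard]
    · rintro rfl
      simp
  · set p : Fin n → Prop := fun x => (x : ℕ) < n / 2 with hp
    have hip : ∀ S : Finset (Fin n), S ∩ univ.filter p = S.filter p := by
      intro S; ext x; simp [Finset.mem_filter]
    have hipn : ∀ S : Finset (Fin n),
        S ∩ univ.filter (fun x => ¬ p x) = S.filter (fun x => ¬ p x) := by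
      intro S; ext x; simp [Finset.mem_filter]
    have hX1 : (univ.filter p).card = n / 2 := by
      rcases Nat.eq_zero_or_pos n with rfl | hn
      · simp
      have h : (univ.filter p).card = (Finset.range (n / 2)).card := by
        apply Finset.card_nbij' (i := fun x : Fin n => (x : ℕ))
          (j := fun m : ℕ => if h : m < n then (⟨m, h⟩ : Fin n) else ⟨0, hn⟩)
        · intro x hx
          simp only [Finset.mem_filter, Finset.mem_univ, true_and, hp] at hx
          simpa using hx
        · intro m hm
          simp only [Finset.mem_coe, Finset.mem_range] at hm
          have hmn : m < n := by omega
          simp [hp, hmn, hm]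
        · intro x hx
          simp [x.isLt]
        · intro m hm
          simp only [Finset.mem_coe, Finset.mem_range] at hm
          have hmn : m < n := by omega
          simp [hmn]
      rw [h, Finset.card_range]
    have hX2 : (univ.filter (fun x => ¬ p x)).card = n - n / 2 := by
      have := Finset.card_filter_add_card_filter_not (s := (univ : Finset (Fin n))) p
      rw [hX1, Finset.card_univ, Fintype.card_fin] at this
      omega
    have himg : Finset.image A univ = Finset.powersetCard (n / 2) (univ : Finset (Fin n)) := by
      apply Finset.eq_of_subset_of_card_le
      · intro S hS
        simp only [Finset.mem_image] at hS
        obtain ⟨i, -, rfl⟩ := hS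
        exact Finset.mem_powersetCard.2 ⟨Finset.subset_univ _, hcard i⟩
      · rw [Finset.card_powersetCard, Finset.card_univ, Fintype.card_fin,
          Finset.card_image_of_injective _ hinj, Finset.card_univ, Fintype.card_fin]
    have hsum : ∑ i, ((((n / 2).choose ((A i ∩ univ.filter p).card)) : ℝ) *
          (((n - n / 2).choose ((A i ∩ univ.filter (fun x => ¬ p x)).card)) : ℝ))⁻¹
        = ∑ S ∈ Finset.powersetCard (n / 2) (univ : Finset (Fin n)),
            ((((n / 2).choose ((S ∩ univ.filter p).card)) : ℝ) *
            (((n - n / 2).choose ((S ∩ univ.filter (fun x => ¬ p x)).card)) : ℝ))⁻¹ := by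
      rw [← himg, Finset.sum_image (fun i _ j _ h => hinj h)]
    rw [hsum]
    rw [← Finset.sum_fiberwise_of_maps_to (g := fun S => (S.filter p).card)
      (t := Finset.range (n / 2 + 1)) ?mapsto]
    case mapsto =>
      intro S hS
      rw [Finset.mem_powersetCard] at hS
      exact Finset.mem_range.2 (Nat.lt_succ_of_le
        (le_trans (Finset.card_filter_le _ _) (le_of_eq hS.2)))
    have key : ∀ a ∈ Finset.range (n / 2 + 1),
        ∑ S ∈ (Finset.powersetCard (n / 2) (univ : Finset (Fin n))).filter
            (fun S => (S.filter p).card = a),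
          ((((n / 2).choose ((S ∩ univ.filter p).card)) : ℝ) *
            (((n - n / 2).choose ((S ∩ univ.filter (fun x => ¬ p x)).card)) : ℝ))⁻¹ = 1 := by
      intro a ha
      rw [Finset.mem_range, Nat.lt_succ_iff] at ha
      have hconst : ∀ S ∈ (Finset.powersetCard (n / 2) (univ : Finset (Fin n))).filter
          (fun S => (S.filter p).card = a),
          ((((n / 2).choose ((S ∩ univ.filter p).card)) : ℝ) *
            (((n - n / 2).choose ((S ∩ univ.filter (fun x => ¬ p x)).card)) : ℝ))⁻¹
          = ((((n / 2).choose a) : ℝ) * (((n - n / 2).choose (n / 2 - a)) : ℝ))⁻¹ := by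
        intro S hS
        rw [Finset.mem_filter, Finset.mem_powersetCard] at hS
        obtain ⟨⟨-, hSc⟩, hSa⟩ := hS
        have hsplit := Finset.card_filter_add_card_filter_not (s := S) p
        have hrest : (S.filter (fun x => ¬ p x)).card = n / 2 - a := by omega
        rw [hip, hipn, hSa, hrest]
      rw [Finset.sum_congr rfl hconst, Finset.sum_const, nsmul_eq_mul]
      have hcount : ((Finset.powersetCard (n / 2) (univ : Finset (Fin n))).filter
          (fun S => (S.filter p).card = a)).card
          = (n / 2).choose a * (n - n / 2).choose (n / 2 - a) := by
        rw [show (n / 2).choose a * (n - n / 2).choose (n / 2 - a)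
            = ((Finset.powersetCard a (univ.filter p)) ×ˢ
              (Finset.powersetCard (n / 2 - a) (univ.filter (fun x => ¬ p x)))).card by
          rw [Finset.card_product, Finset.card_powersetCard, Finset.card_powersetCard, hX1, hX2]]
        apply Finset.card_nbij' (fun S => (S.filter p, S.filter (fun x => ¬ p x)))
          (fun T => T.1 ∪ T.2)
        · intro S hS
          rw [Finset.mem_coe, Finset.mem_filter, Finset.mem_powersetCard] at hS
          obtain ⟨⟨-, hSc⟩, hSa⟩ := hS
          have hsplit := Finset.card_filter_add_card_filter_not (s := S) p
          simp only [Finset.mem_coe, Finset.mem_product, Finset.mem_powersetCard]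
          exact ⟨⟨Finset.filter_subset_filter _ (Finset.subset_univ S), hSa⟩,
            Finset.filter_subset_filter _ (Finset.subset_univ S), by omega⟩
        · intro T hT
          rw [Finset.mem_coe, Finset.mem_product, Finset.mem_powersetCard, Finset.mem_powersetCard] at hT
          obtain ⟨⟨hT1, hT1c⟩, hT2, hT2c⟩ := hT
          have hdisj : Disjoint T.1 T.2 := by
            refine Finset.disjoint_left.2 fun x hx1 hx2 => ?_
            have h1 := hT1 hx1
            have h2 := hT2 hx2
            simp only [Finset.mem_filter] at h1 h2
            exact h2.2 h1.2
          have hfil1 : (T.1 ∪ T.2).filter p = T.1 := by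
            rw [Finset.filter_union,
              Finset.filter_true_of_mem fun x hx => (Finset.mem_filter.1 (hT1 hx)).2,
              Finset.filter_false_of_mem fun x hx => (Finset.mem_filter.1 (hT2 hx)).2,
              Finset.union_empty]
          rw [Finset.mem_coe, Finset.mem_filter, Finset.mem_powersetCard]
          refine ⟨⟨Finset.subset_univ _, ?_⟩, by rw [hfil1, hT1c]⟩
          rw [Finset.card_union_of_disjoint hdisj, hT1c, hT2c]
          omega
        · intro S hS
          exact Finset.filter_union_filter_not_eq p S
        · intro T hT
          rw [Finset.mem_coe, Finset.mem_product, Finset.mem_powersetCard, Finset.mem_powersetCard] at hT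
          obtain ⟨⟨hT1, hT1c⟩, hT2, hT2c⟩ := hT
          have e1 : T.1.filter p = T.1 := Finset.filter_true_of_mem fun x hx =>
            (Finset.mem_filter.1 (hT1 hx)).2
          have e2 : T.2.filter p = ∅ := Finset.filter_false_of_mem fun x hx =>
            (Finset.mem_filter.1 (hT2 hx)).2
          have e1' : T.1.filter (fun x => ¬ p x) = ∅ := Finset.filter_false_of_mem
            fun x hx => not_not_intro (Finset.mem_filter.1 (hT1 hx)).2
          have e2' : T.2.filter (fun x => ¬ p x) = T.2 := Finset.filter_true_of_mem
            fun x hx => (Finset.mem_filter.1 (hT2 hx)).2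
          dsimp only
          rw [Finset.filter_union, Finset.filter_union, e1, e2, e1', e2',
            Finset.union_empty, Finset.empty_union]
      rw [hcount]
      have h1 : (n / 2).choose a ≠ 0 := (Nat.choose_pos ha).ne'
      have h2 : (n - n / 2).choose (n / 2 - a) ≠ 0 := (Nat.choose_pos (by omega)).ne' 
      push_cast
      field_simp
    rw [Finset.sum_congr rfl key, Finset.sum_const, Finset.card_range, nsmul_eq_mul]
    push_cast
    ring
end

section
/- Let X = [n] be the disjoint union of X_1 and X_2, and let F_1, ..., F_m ⊆ [n] be distinct sets forming an antichain. Then ∑_{i=1}^m (binom(|X_1|, |F_i ∩ X_1|) · binom(|X_2|, |F_i ∩ X_2|))^{-1} ≤ 1 + ⌊n/2⌋. -/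
open Nat
open Finset

variable {α : Type*} [Fintype α] [DecidableEq α]

/-- `T` is an initial segment of the ordering `σ`. -/
def IsInit {N : ℕ} (σ : Fin N ≃ α) (T : Finset α) : Prop :=
  ∀ j : Fin N, σ j ∈ T ↔ (j : ℕ) < T.card

instance {N : ℕ} (σ : Fin N ≃ α) (T : Finset α) : Decidable (IsInit σ T) := by
  unfold IsInit; infer_instance

lemma IsInit.subset {N : ℕ} {σ : Fin N ≃ α} {T T' : Finset α}
    (hT : IsInit σ T) (hT' : IsInit σ T') (h : T.card ≤ T'.card) : T ⊆ T' := by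
  intro x hx
  have h1 := (hT (σ.symm x))
  have h2 := (hT' (σ.symm x))
  simp only [Equiv.apply_symm_apply] at h1 h2
  exact h2.2 (lt_of_lt_of_le (h1.1 hx) h)

lemma count_init {N : ℕ} (hN : Fintype.card α = N) (T : Finset α) :
    Fintype.card {σ : Fin N ≃ α // IsInit σ T} =
      (T.card)! * (N - T.card)! := by
  set a := T.card with ha
  have haN : a ≤ N := by
    rw [← hN, ha]; simpa using Fintype.card_subtype_le (· ∈ T)
  have hsum : a + (N - a) = N := Nat.add_sub_cancel' haN
  let g : Fin a ⊕ Fin (N - a) ≃ Fin N := finSumFinEquiv.trans (finCongr hsum)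
  have hgl : ∀ k : Fin a, ((g (Sum.inl k)) : ℕ) = (k : ℕ) := fun k => rfl
  have hgr : ∀ k : Fin (N - a), ((g (Sum.inr k)) : ℕ) = a + (k : ℕ) := fun k => rfl
  have cardT : Fintype.card {x // x ∈ T} = a := Fintype.card_coe T
  have cardTc : Fintype.card {x // x ∉ T} = N - a := by
    rw [Fintype.card_subtype_compl, cardT, hN]
  let Φ : ((Fin a ≃ {x // x ∈ T}) × (Fin (N - a) ≃ {x // x ∉ T})) →
      {σ : Fin N ≃ α // IsInit σ T} := fun p =>
    ⟨g.symm.trans ((p.1.sumCongr p.2).trans (Equiv.sumCompl (· ∈ T))), by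
      intro j
      rcases hj : g.symm j with k | k
      · have hjv : (j : ℕ) = (k : ℕ) := by
          rw [← hgl k, ← hj, Equiv.apply_symm_apply]
        simp [Equiv.sumCongr_apply, hj, hjv, (p.1 k).2, k.2]
        exact k.2
      · have hjv : (j : ℕ) = a + (k : ℕ) := by
          rw [← hgr k, ← hj, Equiv.apply_symm_apply]
        simp [Equiv.sumCongr_apply, hj, hjv, (p.2 k).2]
        exact Nat.le_add_right _ _⟩
  have hbij : Function.Bijective Φ := by
    constructor
    · intro p q hpq
      have h1 : g.symm.trans ((p.1.sumCongr p.2).trans (Equiv.sumCompl (· ∈ T))) =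
          g.symm.trans ((q.1.sumCongr q.2).trans (Equiv.sumCompl (· ∈ T))) :=
        congrArg Subtype.val hpq
      have hfst : p.1 = q.1 := by
        apply Equiv.ext; intro k
        apply Subtype.ext
        have := congrArg (fun e : Fin N ≃ α => e (g (Sum.inl k))) h1
        simpa [Equiv.sumCongr_apply] using this
      have hsnd : p.2 = q.2 := by
        apply Equiv.ext; intro k
        apply Subtype.ext
        have := congrArg (fun e : Fin N ≃ α => e (g (Sum.inr k))) h1
        simpa [Equiv.sumCongr_apply] using this
      exact Prod.ext hfst hsnd
    · rintro ⟨σ, hσ⟩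
      have hu' : ∀ k : Fin a, (σ (g (Sum.inl k)) : α) ∈ T := by
        intro k
        refine (hσ (g (Sum.inl k))).2 ?_
        rw [hgl k]; exact lt_of_lt_of_le k.2 le_rfl
      have hv' : ∀ k : Fin (N - a), (σ (g (Sum.inr k)) : α) ∉ T := by
        intro k hmem
        have := (hσ (g (Sum.inr k))).1 hmem
        rw [hgr k] at this; omega
      let u' : Fin a → {x // x ∈ T} := fun k => ⟨σ (g (Sum.inl k)), hu' k⟩
      let v' : Fin (N - a) → {x // x ∉ T} := fun k => ⟨σ (g (Sum.inr k)), hv' k⟩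
      have hu'inj : Function.Injective u' := by
        intro k l hkl
        have : σ (g (Sum.inl k)) = σ (g (Sum.inl l)) := congrArg Subtype.val hkl
        have := g.injective (σ.injective this)
        exact Sum.inl.inj this
      have hv'inj : Function.Injective v' := by
        intro k l hkl
        have : σ (g (Sum.inr k)) = σ (g (Sum.inr l)) := congrArg Subtype.val hkl
        have := g.injective (σ.injective this)
        exact Sum.inr.inj this
      have hu'bij : Function.Bijective u' :=
        (Fintype.bijective_iff_injective_and_card u').2 ⟨hu'inj, by simp [cardT]⟩
      have hv'bij : Function.Bijective v' :=
        (Fintype.bijective_iff_injective_and_card v').2 ⟨hv'inj, by simp [cardTc]⟩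
      refine ⟨⟨Equiv.ofBijective u' hu'bij, Equiv.ofBijective v' hv'bij⟩, ?_⟩
      apply Subtype.ext
      apply Equiv.ext
      intro j
      show ((Equiv.sumCompl (· ∈ T)) (((Equiv.ofBijective u' hu'bij).sumCongr
        (Equiv.ofBijective v' hv'bij)) (g.symm j))) = σ j
      rcases hj : g.symm j with k | k
      · have : j = g (Sum.inl k) := by rw [← hj, Equiv.apply_symm_apply]
        simp [hj, Equiv.sumCongr_apply, Equiv.ofBijective_apply, u', this]
      · have : j = g (Sum.inr k) := by rw [← hj, Equiv.apply_symm_apply]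
        simp [hj, Equiv.sumCongr_apply, Equiv.ofBijective_apply, v', this]
  calc Fintype.card {σ : Fin N ≃ α // IsInit σ T}
      = Fintype.card ((Fin a ≃ {x // x ∈ T}) × (Fin (N - a) ≃ {x // x ∉ T})) :=
        (Fintype.card_of_bijective hbij).symm
    _ = a ! * (N - a)! := by
        rw [Fintype.card_prod,
          Fintype.card_equiv (Fintype.equivOfCardEq (by simp [cardT])),
          Fintype.card_equiv (Fintype.equivOfCardEq (by simp [cardTc])),
          Fintype.card_fin, Fintype.card_fin]

theorem lym_two_parts (n m : ℕ) (X₁ X₂ : Finset (Fin n))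
    (hX : Disjoint X₁ X₂) (hcover : X₁ ∪ X₂ = Finset.univ)
    (F : Fin m → Finset (Fin n))
    (hinj : Function.Injective F)
    (hanti : ∀ i j, i ≠ j → ¬ F i ⊆ F j) :
    ∑ i, ((X₁.card.choose (F i ∩ X₁).card : ℝ) *
        (X₂.card.choose (F i ∩ X₂).card : ℝ))⁻¹ ≤ 1 + (n / 2 : ℕ) := by
  classical
  set n₁ := X₁.card with hn₁def
  set n₂ := X₂.card with hn₂def
  have hcard₁ : Fintype.card {x : Fin n // x ∈ X₁} = n₁ := by
    exact Fintype.card_coe X₁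
  have hcard₂ : Fintype.card {x : Fin n // x ∈ X₂} = n₂ := by
    exact Fintype.card_coe X₂
  have hn : n₁ + n₂ = n := by
    have h := Finset.card_union_of_disjoint hX
    rw [hcover, Finset.card_univ, Fintype.card_fin] at h
    omega
  have hale : ∀ i, (F i ∩ X₁).card ≤ n₁ :=
    fun i => Finset.card_le_card Finset.inter_subset_right
  have hble : ∀ i, (F i ∩ X₂).card ≤ n₂ :=
    fun i => Finset.card_le_card Finset.inter_subset_right
  let T₁ : Fin m → Finset {x : Fin n // x ∈ X₁} := fun i => (F i ∩ X₁).subtype (· ∈ X₁)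
  let T₂ : Fin m → Finset {x : Fin n // x ∈ X₂} := fun i => (F i ∩ X₂).subtype (· ∈ X₂)
  have hT₁ : ∀ i, (T₁ i).card = (F i ∩ X₁).card := by
    intro i
    rw [Finset.card_subtype,
      Finset.filter_true_of_mem (fun x hx => (Finset.mem_inter.1 hx).2)]
  have hT₂ : ∀ i, (T₂ i).card = (F i ∩ X₂).card := by
    intro i
    rw [Finset.card_subtype,
      Finset.filter_true_of_mem (fun x hx => (Finset.mem_inter.1 hx).2)]
  let Ω := (Fin n₁ ≃ {x : Fin n // x ∈ X₁}) × (Fin n₂ ≃ {x : Fin n // x ∈ X₂})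
  let Good : Fin m → Ω → Prop := fun i ω => IsInit ω.1 (T₁ i) ∧ IsInit ω.2 (T₂ i)
  have subset_of : ∀ i j (ω : Ω), Good i ω → Good j ω →
      (F i ∩ X₁).card ≤ (F j ∩ X₁).card → (F i ∩ X₂).card ≤ (F j ∩ X₂).card →
      F i ⊆ F j := by
    intro i j ω hi hj hab hbd
    have h1 : T₁ i ⊆ T₁ j := IsInit.subset hi.1 hj.1 (by rw [hT₁, hT₁]; exact hab)
    have h2 : T₂ i ⊆ T₂ j := IsInit.subset hi.2 hj.2 (by rw [hT₂, hT₂]; exact hbd)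
    intro x hx
    have hx' : x ∈ X₁ ∪ X₂ := by rw [hcover]; exact Finset.mem_univ x
    rcases Finset.mem_union.1 hx' with h | h
    · have hm : (⟨x, h⟩ : {x : Fin n // x ∈ X₁}) ∈ T₁ i :=
        Finset.mem_subtype.2 (Finset.mem_inter.2 ⟨hx, h⟩)
      exact (Finset.mem_inter.1 (Finset.mem_subtype.1 (h1 hm))).1
    · have hm : (⟨x, h⟩ : {x : Fin n // x ∈ X₂}) ∈ T₂ i :=
        Finset.mem_subtype.2 (Finset.mem_inter.2 ⟨hx, h⟩)
      exact (Finset.mem_inter.1 (Finset.mem_subtype.1 (h2 hm))).1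
  have key_bound : ∀ ω : Ω,
      (Finset.univ.filter (fun i => Good i ω)).card ≤ min n₁ n₂ + 1 := by
    intro ω
    have step : ∀ i ∈ Finset.univ.filter (fun i => Good i ω),
        ∀ j ∈ Finset.univ.filter (fun i => Good i ω), i ≠ j →
        (F i ∩ X₁).card ≠ (F j ∩ X₁).card ∧ (F i ∩ X₂).card ≠ (F j ∩ X₂).card := by
      intro i hi j hj hne
      have hgi := (Finset.mem_filter.1 hi).2
      have hgj := (Finset.mem_filter.1 hj).2
      constructor
      · intro heq
        rcases le_total ((F i ∩ X₂).card) ((F j ∩ X₂).card) with h | h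
        · exact hanti i j hne (subset_of i j ω hgi hgj (le_of_eq heq) h)
        · exact hanti j i hne.symm (subset_of j i ω hgj hgi (le_of_eq heq.symm) h)
      · intro heq
        rcases le_total ((F i ∩ X₁).card) ((F j ∩ X₁).card) with h | h
        · exact hanti i j hne (subset_of i j ω hgi hgj h (le_of_eq heq))
        · exact hanti j i hne.symm (subset_of j i ω hgj hgi h (le_of_eq heq.symm))
    have h1 : (Finset.univ.filter (fun i => Good i ω)).card ≤ n₁ + 1 := by
      have := Finset.card_le_card_of_injOn (f := fun i => (F i ∩ X₁).card)
        (t := Finset.range (n₁ + 1))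
        (fun i _ => Finset.mem_range.2 (Nat.lt_succ_of_le (hale i)))
        (fun i hi j hj hij => by
          by_contra hne
          exact (step i hi j hj hne).1 hij)
      simpa using this
    have h2 : (Finset.univ.filter (fun i => Good i ω)).card ≤ n₂ + 1 := by
      have := Finset.card_le_card_of_injOn (f := fun i => (F i ∩ X₂).card)
        (t := Finset.range (n₂ + 1))
        (fun i _ => Finset.mem_range.2 (Nat.lt_succ_of_le (hble i)))
        (fun i hi j hj hij => by
          by_contra hne
          exact (step i hi j hj hne).2 hij)
      simpa using this
    omega
  have count_i : ∀ i, Fintype.card {ω : Ω // Good i ω} =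
      ((F i ∩ X₁).card ! * (n₁ - (F i ∩ X₁).card)!) *
      ((F i ∩ X₂).card ! * (n₂ - (F i ∩ X₂).card)!) := by
    intro i
    have e : {ω : Ω // Good i ω} ≃
        ({σ : Fin n₁ ≃ {x : Fin n // x ∈ X₁} // IsInit σ (T₁ i)} ×
         {τ : Fin n₂ ≃ {x : Fin n // x ∈ X₂} // IsInit τ (T₂ i)}) :=
      Equiv.subtypeProdEquivProd
        (p := fun σ : Fin n₁ ≃ {x : Fin n // x ∈ X₁} => IsInit σ (T₁ i))
        (q := fun τ : Fin n₂ ≃ {x : Fin n // x ∈ X₂} => IsInit τ (T₂ i))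
    rw [Fintype.card_congr e, Fintype.card_prod,
      count_init hcard₁ (T₁ i), count_init hcard₂ (T₂ i), hT₁, hT₂]
  have cardΩ : Fintype.card Ω = n₁ ! * n₂ ! := by
    rw [Fintype.card_prod,
      Fintype.card_equiv (Fintype.equivOfCardEq (by rw [Fintype.card_fin, hcard₁])),
      Fintype.card_equiv (Fintype.equivOfCardEq (by rw [Fintype.card_fin, hcard₂])),
      Fintype.card_fin, Fintype.card_fin]
  have hswap : ∑ i : Fin m, Fintype.card {ω : Ω // Good i ω}
      = ∑ ω : Ω, (Finset.univ.filter (fun i => Good i ω)).card := by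
    calc ∑ i : Fin m, Fintype.card {ω : Ω // Good i ω}
        = ∑ i : Fin m, ∑ ω : Ω, if Good i ω then 1 else 0 := by
          refine Finset.sum_congr rfl fun i _ => ?_
          rw [Fintype.card_subtype]
          rw [Finset.card_filter]
      _ = ∑ ω : Ω, ∑ i : Fin m, if Good i ω then 1 else 0 := Finset.sum_comm
      _ = ∑ ω : Ω, (Finset.univ.filter (fun i => Good i ω)).card := by
          refine Finset.sum_congr rfl fun ω _ => ?_
          rw [Finset.card_filter]
  have main_nat : ∑ i : Fin m, Fintype.card {ω : Ω // Good i ω}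
      ≤ (n₁ ! * n₂ !) * (min n₁ n₂ + 1) := by
    rw [hswap]
    calc ∑ ω : Ω, (Finset.univ.filter (fun i => Good i ω)).card
        ≤ ∑ _ω : Ω, (min n₁ n₂ + 1) := Finset.sum_le_sum fun ω _ => key_bound ω
      _ = Fintype.card Ω * (min n₁ n₂ + 1) := by
          rw [Finset.sum_const, Finset.card_univ, smul_eq_mul]
      _ = (n₁ ! * n₂ !) * (min n₁ n₂ + 1) := by rw [cardΩ]
  have hfacne : ((n₁ ! * n₂ ! : ℕ) : ℝ) ≠ 0 := by
    positivity
  have term_eq : ∀ i, ((n₁.choose (F i ∩ X₁).card : ℝ) * (n₂.choose (F i ∩ X₂).card : ℝ))⁻¹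
      = (Fintype.card {ω : Ω // Good i ω} : ℝ) / ((n₁ ! * n₂ ! : ℕ) : ℝ) := by
    intro i
    have hNat : (Fintype.card {ω : Ω // Good i ω}) *
        (n₁.choose (F i ∩ X₁).card * n₂.choose (F i ∩ X₂).card) = n₁ ! * n₂ ! := by
      rw [count_i i, ← Nat.choose_mul_factorial_mul_factorial (hale i),
        ← Nat.choose_mul_factorial_mul_factorial (hble i)]
      ring
    have hc1 : (0:ℝ) < (n₁.choose (F i ∩ X₁).card : ℝ) :=
      Nat.cast_pos.2 (Nat.choose_pos (hale i))
    have hc2 : (0:ℝ) < (n₂.choose (F i ∩ X₂).card : ℝ) :=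
      Nat.cast_pos.2 (Nat.choose_pos (hble i))
    rw [eq_div_iff hfacne, inv_mul_eq_iff_eq_mul₀ (by positivity)]
    rw [← hNat]
    push_cast
    ring
  calc ∑ i, ((n₁.choose (F i ∩ X₁).card : ℝ) * (n₂.choose (F i ∩ X₂).card : ℝ))⁻¹
      = (∑ i : Fin m, (Fintype.card {ω : Ω // Good i ω} : ℝ)) / ((n₁ ! * n₂ ! : ℕ) : ℝ) := by
        rw [Finset.sum_div]
        exact Finset.sum_congr rfl fun i _ => term_eq i
    _ ≤ (((n₁ ! * n₂ !) * (min n₁ n₂ + 1) : ℕ) : ℝ) / ((n₁ ! * n₂ ! : ℕ) : ℝ) := by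
        have hle : (∑ i : Fin m, (Fintype.card {ω : Ω // Good i ω} : ℝ))
            ≤ (((n₁ ! * n₂ !) * (min n₁ n₂ + 1) : ℕ) : ℝ) := by
          rw [← Nat.cast_sum]
          exact_mod_cast main_nat
        gcongr
    _ = ((min n₁ n₂ + 1 : ℕ) : ℝ) := by
        push_cast
        rw [mul_comm, mul_div_assoc, div_self (by exact_mod_cast hfacne), mul_one]
    _ ≤ 1 + (n / 2 : ℕ) := by
        have : min n₁ n₂ + 1 ≤ 1 + n / 2 := by omega
        calc ((min n₁ n₂ + 1 : ℕ) : ℝ) ≤ ((1 + n / 2 : ℕ) : ℝ) := Nat.cast_le.2 this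
          _ = 1 + (n / 2 : ℕ) := by push_cast; ring
end

section
/- Let X = [n] be the disjoint union of X_1, ..., X_r, and let F_1, ..., F_m ⊆ [n] be distinct sets forming an antichain. Then ∑_{i=1}^m (∏_{k=1}^r binom(|X_k|, |F_i ∩ X_k|))^{-1} ≤ (1 + n/r)^{r-1}. -/
open Finset
open scoped Nat

open scoped Classical in
lemma countA {n : ℕ} (T S : Finset (Fin n)) (hST : S ⊆ T) :
    Fintype.card {e : Fin T.card ≃ {x // x ∈ T} //
      ∀ x : {x // x ∈ T}, ((x : Fin n) ∈ S ↔ ((e.symm x : Fin T.card) : ℕ) < S.card)}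
      = S.card ! * (T.card - S.card) ! := by
  set t := T.card with ht
  set s := S.card with hs
  have hst : s ≤ t := card_le_card hST
  have h1 : Fintype.card {x // x ∈ S} = s := Fintype.card_coe S
  have h2 : Fintype.card {x // x ∈ T \ S} = t - s := by
    rw [Fintype.card_coe, Finset.card_sdiff_of_subset hST]
  have hT : Fintype.card {x // x ∈ T} = t := Fintype.card_coe T
  have cardQ : Fintype.card ((Fin s ≃ {x // x ∈ S}) × (Fin (t - s) ≃ {x // x ∈ T \ S}))
      = s ! * (t - s) ! := by
    rw [Fintype.card_prod,
      Fintype.card_equiv (Fintype.equivOfCardEq (by simp only [Fintype.card_fin, h1])),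
      Fintype.card_equiv (Fintype.equivOfCardEq (by simp only [Fintype.card_fin, h2]))]
    simp
  rw [← cardQ]
  apply le_antisymm
  · -- Ψ : subtype → pairs
    have memS : ∀ (e : {e : Fin t ≃ {x // x ∈ T} //
        ∀ x : {x // x ∈ T}, ((x : Fin n) ∈ S ↔ ((e.symm x : Fin t) : ℕ) < s)}) (i : Fin s),
        ((e.1 (Fin.castLE hst i) : Fin n)) ∈ S := by
      intro e i
      rw [e.2 (e.1 (Fin.castLE hst i)), Equiv.symm_apply_apply]
      exact i.2
    have memTS : ∀ (e : {e : Fin t ≃ {x // x ∈ T} //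
        ∀ x : {x // x ∈ T}, ((x : Fin n) ∈ S ↔ ((e.symm x : Fin t) : ℕ) < s)}) (i : Fin (t - s)),
        ((e.1 ⟨s + (i : ℕ), by omega⟩ : Fin n)) ∈ T \ S := by
      intro e i
      rw [Finset.mem_sdiff]
      refine ⟨(e.1 _).2, ?_⟩
      rw [e.2 (e.1 _), Equiv.symm_apply_apply]
      simp
    set Ψ := fun (e : {e : Fin t ≃ {x // x ∈ T} //
        ∀ x : {x // x ∈ T}, ((x : Fin n) ∈ S ↔ ((e.symm x : Fin t) : ℕ) < s)}) =>
      ((Equiv.ofBijective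
          (fun (i : Fin s) => (⟨(e.1 (Fin.castLE hst i) : Fin n), memS e i⟩ : {x // x ∈ S}))
        ((Fintype.bijective_iff_injective_and_card _).2 ⟨by
          intro a b hab
          replace hab := congrArg Subtype.val hab
          simp only at hab
          exact Fin.castLE_injective hst (e.1.injective (Subtype.ext hab)),
          by simp only [Fintype.card_fin, h1]⟩),
       Equiv.ofBijective
          (fun (i : Fin (t - s)) => (⟨(e.1 ⟨s + (i : ℕ), by omega⟩ : Fin n), memTS e i⟩ :
          {x // x ∈ T \ S}))
        ((Fintype.bijective_iff_injective_and_card _).2 ⟨by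
          intro a b hab
          replace hab := congrArg Subtype.val hab
          simp only at hab
          have h'' := congrArg Fin.val (e.1.injective (Subtype.ext hab))
          simp only [] at h''
          exact Fin.ext (by omega),
          by simp only [Fintype.card_fin, h2]⟩))) with hΨ
    apply Fintype.card_le_of_injective Ψ
    intro e e' hee
    have hA := congrArg Prod.fst hee
    have hB := congrArg Prod.snd hee
    apply Subtype.ext
    apply Equiv.ext
    intro i
    rcases lt_or_ge (i : ℕ) s with h | h
    · have h3 := congrArg
        (fun f : Fin s ≃ {x // x ∈ S} => ((f ⟨(i : ℕ), h⟩ : {x // x ∈ S}) : Fin n)) hA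
      simp only [hΨ, Equiv.ofBijective_apply] at h3
      have heq : (Fin.castLE hst ⟨(i : ℕ), h⟩) = i := rfl
      rw [heq] at h3
      exact Subtype.ext h3
    · have hi : (i : ℕ) - s < t - s := by omega
      have h3 := congrArg
        (fun f : Fin (t - s) ≃ {x // x ∈ T \ S} =>
          ((f ⟨(i : ℕ) - s, hi⟩ : {x // x ∈ T \ S}) : Fin n)) hB
      simp only [hΨ, Equiv.ofBijective_apply] at h3
      have heq : (⟨s + ((⟨(i : ℕ) - s, hi⟩ : Fin (t - s)) : ℕ), by omega⟩ : Fin t) = i :=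
        Fin.ext (show s + ((i : ℕ) - s) = (i : ℕ) by omega)
      rw [heq] at h3
      exact Subtype.ext h3
  · -- Φ : pairs → subtype
    set h := fun (p : (Fin s ≃ {x // x ∈ S}) × (Fin (t - s) ≃ {x // x ∈ T \ S})) (i : Fin t) =>
      if hlt : (i : ℕ) < s then
        (⟨(p.1 ⟨(i : ℕ), hlt⟩ : Fin n), hST (p.1 _).2⟩ : {x // x ∈ T})
      else
        (⟨(p.2 ⟨(i : ℕ) - s, by omega⟩ : Fin n), (Finset.mem_sdiff.1 (p.2 _).2).1⟩ :
          {x // x ∈ T}) with hh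
    have hinj : ∀ p, Function.Injective (h p) := by
      intro p a b hab
      by_cases ha : (a : ℕ) < s <;> by_cases hb : (b : ℕ) < s <;>
        simp only [hh, dif_pos, dif_neg, ha, hb] at hab
      · replace hab := congrArg Subtype.val hab
        simp only at hab
        have := congrArg Fin.val (p.1.injective (Subtype.ext hab))
        simp only at this
        exact Fin.ext this
      · exfalso
        have h1' : (p.1 ⟨(a : ℕ), ha⟩ : {x // x ∈ S}).1 ∈ S := (p.1 _).2
        have h2' : (p.2 ⟨(b : ℕ) - s, by omega⟩ : {x // x ∈ T \ S}).1 ∈ T \ S := (p.2 _).2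
        rw [show (p.1 ⟨(a : ℕ), ha⟩ : {x // x ∈ S}).1
          = (p.2 ⟨(b : ℕ) - s, by omega⟩ : {x // x ∈ T \ S}).1 from congrArg Subtype.val hab]
          at h1'
        exact (Finset.mem_sdiff.1 h2').2 h1'
      · exfalso
        have h1' : (p.1 ⟨(b : ℕ), hb⟩ : {x // x ∈ S}).1 ∈ S := (p.1 _).2
        have h2' : (p.2 ⟨(a : ℕ) - s, by omega⟩ : {x // x ∈ T \ S}).1 ∈ T \ S := (p.2 _).2
        rw [show (p.1 ⟨(b : ℕ), hb⟩ : {x // x ∈ S}).1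
          = (p.2 ⟨(a : ℕ) - s, by omega⟩ : {x // x ∈ T \ S}).1 from
            (congrArg Subtype.val hab).symm] at h1'
        exact (Finset.mem_sdiff.1 h2').2 h1'
      · replace hab := congrArg Subtype.val hab
        have := congrArg Fin.val (p.2.injective (Subtype.ext hab))
        simp only at this
        exact Fin.ext (by omega)
    set Φ := fun (p : (Fin s ≃ {x // x ∈ S}) × (Fin (t - s) ≃ {x // x ∈ T \ S})) =>
      Equiv.ofBijective (h p)
        ((Fintype.bijective_iff_injective_and_card _).2 ⟨hinj p, by
          simp only [Fintype.card_fin, hT]⟩) with hΦ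
    have hcond : ∀ p, ∀ x : {x // x ∈ T},
        ((x : Fin n) ∈ S ↔ (((Φ p).symm x : Fin t) : ℕ) < s) := by
      intro p x
      obtain ⟨i, rfl⟩ := (Φ p).surjective x
      rw [Equiv.symm_apply_apply]
      have happ : Φ p i = h p i := rfl
      rw [happ]
      by_cases hlt : (i : ℕ) < s
      · simp only [hh, dif_pos hlt]
        exact ⟨fun _ => hlt, fun _ => (p.1 _).2⟩
      · simp only [hh, dif_neg hlt]
        exact ⟨fun hc => absurd hc (Finset.mem_sdiff.1 (p.2 _).2).2, fun hc => absurd hc hlt⟩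
    apply Fintype.card_le_of_injective (fun p => (⟨Φ p, hcond p⟩ :
      {e : Fin t ≃ {x // x ∈ T} //
        ∀ x : {x // x ∈ T}, ((x : Fin n) ∈ S ↔ ((e.symm x : Fin t) : ℕ) < s)}))
    intro p q hpq
    replace hpq := congrArg Subtype.val hpq
    have happ : ∀ i : Fin t, h p i = h q i := by
      intro i
      have := congrArg (fun (f : Fin t ≃ {x // x ∈ T}) => f i) hpq
      simpa [hΦ] using this
    ext1
    · apply Equiv.ext
      intro j
      have := happ (Fin.castLE hst j)
      have hj : ((Fin.castLE hst j : Fin t) : ℕ) < s := j.2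
      simp only [hh, dif_pos hj] at this
      replace this := congrArg Subtype.val this
      simp only at this
      apply Subtype.ext
      have hcast : (⟨((Fin.castLE hst j : Fin t) : ℕ), hj⟩ : Fin s) = j := Fin.ext rfl
      rw [hcast] at this
      exact this
    · apply Equiv.ext
      intro j
      have hjt : s + (j : ℕ) < t := by omega
      have := happ ⟨s + (j : ℕ), hjt⟩
      have hj : ¬ (((⟨s + (j : ℕ), hjt⟩ : Fin t) : ℕ) < s) := by simp
      simp only [hh, dif_neg hj] at this
      replace this := congrArg Subtype.val this
      simp only at this
      apply Subtype.ext
      have hcast : (⟨((⟨s + (j : ℕ), hjt⟩ : Fin t) : ℕ) - s, by omega⟩ : Fin (t - s)) = j :=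
        Fin.ext (by simp)
      rw [hcast] at this
      exact this

lemma amgm {ι : Type*} (s : Finset ι) (f : ι → ℝ) (hf : ∀ i ∈ s, 0 ≤ f i) :
    ∏ i ∈ s, f i ≤ ((∑ i ∈ s, f i) / s.card) ^ s.card := by
  rcases s.eq_empty_or_nonempty with rfl | hne
  · simp
  have hN : (0 : ℝ) < s.card := by
    exact_mod_cast Finset.card_pos.2 hne
  have key := Real.geom_mean_le_arith_mean_weighted s (fun _ => ((s.card : ℝ))⁻¹) f
    (fun i _ => by positivity)
    (by rw [Finset.sum_const, nsmul_eq_mul]; field_simp) hf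
  have hprod : (∏ i ∈ s, f i ^ ((s.card : ℝ))⁻¹) ^ (s.card : ℕ) = ∏ i ∈ s, f i := by
    rw [← Finset.prod_pow]
    refine Finset.prod_congr rfl fun i hi => ?_
    rw [← Real.rpow_natCast (f i ^ ((s.card : ℝ))⁻¹), ← Real.rpow_mul (hf i hi),
      inv_mul_cancel₀ hN.ne', Real.rpow_one]
  have hsum : ∑ i ∈ s, ((s.card : ℝ))⁻¹ * f i = (∑ i ∈ s, f i) / s.card := by
    rw [← Finset.mul_sum]; ring
  rw [hsum] at key
  calc ∏ i ∈ s, f i = (∏ i ∈ s, f i ^ ((s.card : ℝ))⁻¹) ^ (s.card : ℕ) := hprod.symm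
    _ ≤ ((∑ i ∈ s, f i) / s.card) ^ (s.card : ℕ) := by
        apply pow_le_pow_left₀ _ key
        exact Finset.prod_nonneg fun i hi => Real.rpow_nonneg (hf i hi) _

open scoped Classical in
lemma keycount (n m r : ℕ) (X : Fin r → Finset (Fin n))
    (hcover : Finset.univ.biUnion X = Finset.univ)
    (F : Fin m → Finset (Fin n))
    (hanti : ∀ i j, i ≠ j → ¬ F i ⊆ F j) (j : Fin r) :
    (∑ i : Fin m, ∏ k, ((F i ∩ X k).card ! * ((X k).card - (F i ∩ X k).card) !))
      ≤ (∏ k, (X k).card !) * ∏ k ∈ Finset.univ.erase j, ((X k).card + 1) := by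
  have haX : ∀ (i : Fin m) (k : Fin r), (F i ∩ X k).card ≤ (X k).card :=
    fun i k => card_le_card inter_subset_right
  set good := fun (i : Fin m) (ω : (k : Fin r) → (Fin ((X k).card) ≃ {x // x ∈ X k})) =>
    ∀ k, ∀ x : {x // x ∈ X k},
      ((x : Fin n) ∈ F i ∩ X k ↔ (((ω k).symm x : Fin ((X k).card)) : ℕ) < (F i ∩ X k).card)
    with hgood
  -- step 1 : per-i count
  have step1 : ∀ i : Fin m, (Finset.univ.filter (good i)).card
      = ∏ k, ((F i ∩ X k).card ! * ((X k).card - (F i ∩ X k).card) !) := by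
    intro i
    rw [← Fintype.card_subtype]
    rw [Fintype.card_congr (Equiv.subtypePiEquivPi
      (p := fun (k : Fin r) (e : Fin ((X k).card) ≃ {x // x ∈ X k}) =>
        ∀ x : {x // x ∈ X k},
          ((x : Fin n) ∈ F i ∩ X k ↔ ((e.symm x : Fin ((X k).card)) : ℕ) < (F i ∩ X k).card)))]
    rw [Fintype.card_pi]
    exact Finset.prod_congr rfl fun k _ => countA (X k) (F i ∩ X k) inter_subset_right
  -- step 2 : per-ω antichain bound
  have step2 : ∀ ω, (Finset.univ.filter (fun i => good i ω)).card
      ≤ ∏ k ∈ Finset.univ.erase j, ((X k).card + 1) := by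
    intro ω
    rw [← Fintype.card_subtype]
    have hmono : ∀ i1 i2 : Fin m, good i1 ω → good i2 ω →
        (∀ k, k ≠ j → (F i1 ∩ X k).card = (F i2 ∩ X k).card) →
        (F i1 ∩ X j).card ≤ (F i2 ∩ X j).card → F i1 ⊆ F i2 := by
      intro i1 i2 h1 h2 heq hle x hx
      have hxk : ∃ k, x ∈ X k := by
        have : x ∈ Finset.univ.biUnion X := hcover ▸ Finset.mem_univ x
        simpa using this
      obtain ⟨k, hk⟩ := hxk
      have hle' : (F i1 ∩ X k).card ≤ (F i2 ∩ X k).card := by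
        by_cases hkj : k = j
        · subst hkj; exact hle
        · exact (heq k hkj).le
      have hpos := (h1 k ⟨x, hk⟩).1 (Finset.mem_inter.2 ⟨hx, hk⟩)
      have := (h2 k ⟨x, hk⟩).2 (lt_of_lt_of_le hpos hle')
      exact (Finset.mem_inter.1 this).1
    have hcard := Fintype.card_le_of_injective
      (fun (i : {i // good i ω}) => (fun (k : {k : Fin r // k ≠ j}) =>
        (⟨(F i.1 ∩ X k.1).card, Nat.lt_succ_of_le (haX i.1 k.1)⟩ : Fin ((X k.1).card + 1))))
      (by
        intro i1 i2 h12
        have heq : ∀ k, k ≠ j → (F i1.1 ∩ X k).card = (F i2.1 ∩ X k).card := by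
          intro k hk
          have := congrArg (fun f => (f ⟨k, hk⟩ : ℕ)) h12
          simpa using this
        apply Subtype.ext
        by_contra hne
        rcases le_total ((F i1.1 ∩ X j).card) ((F i2.1 ∩ X j).card) with hle | hle
        · exact hanti i1.1 i2.1 hne (hmono i1.1 i2.1 i1.2 i2.2 heq hle)
        · exact hanti i2.1 i1.1 (Ne.symm hne)
            (hmono i2.1 i1.1 i2.2 i1.2 (fun k hk => (heq k hk).symm) hle))
    refine le_trans hcard (le_of_eq ?_)
    calc Fintype.card ((k : {k : Fin r // k ≠ j}) → Fin ((X k.1).card + 1))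
        = ∏ k : {k : Fin r // k ≠ j}, ((X k.1).card + 1) := by
          rw [Fintype.card_pi]
          exact Finset.prod_congr rfl fun k _ => by simp
      _ = ∏ k ∈ Finset.univ.erase j, ((X k).card + 1) :=
          (Finset.prod_subtype (p := fun k : Fin r => k ≠ j) (Finset.univ.erase j)
            (fun x => by simp) (fun k => (X k).card + 1)).symm
  -- step 3 : total count
  have step3 : Fintype.card ((k : Fin r) → (Fin ((X k).card) ≃ {x // x ∈ X k}))
      = ∏ k, (X k).card ! := by
    rw [Fintype.card_pi]
    exact Finset.prod_congr rfl fun k _ => by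
      rw [Fintype.card_equiv (Fintype.equivOfCardEq (by simp))]
      simp
  calc ∑ i : Fin m, ∏ k, ((F i ∩ X k).card ! * ((X k).card - (F i ∩ X k).card) !)
      = ∑ i : Fin m, (Finset.univ.filter (good i)).card := by
        exact (Finset.sum_congr rfl fun i _ => (step1 i).symm)
    _ = ∑ i : Fin m, ∑ ω, if good i ω then 1 else 0 := by
        exact Finset.sum_congr rfl fun i _ => Finset.card_filter _ _
    _ = ∑ ω, ∑ i : Fin m, if good i ω then 1 else 0 := Finset.sum_comm
    _ = ∑ ω : ((k : Fin r) → (Fin ((X k).card) ≃ {x // x ∈ X k})),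
          (Finset.univ.filter (fun i => good i ω)).card := by
        exact Finset.sum_congr rfl fun ω _ => (Finset.card_filter _ _).symm
    _ ≤ ∑ ω : ((k : Fin r) → (Fin ((X k).card) ≃ {x // x ∈ X k})),
          ∏ k ∈ Finset.univ.erase j, ((X k).card + 1) :=
        Finset.sum_le_sum fun ω _ => step2 ω
    _ = (∏ k, (X k).card !) * ∏ k ∈ Finset.univ.erase j, ((X k).card + 1) := by
        rw [Finset.sum_const, Finset.card_univ, step3, smul_eq_mul]

theorem lym_partition (n m r : ℕ) (X : Fin r → Finset (Fin n))
    (hX : ∀ k l, k ≠ l → Disjoint (X k) (X l))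
    (hcover : Finset.univ.biUnion X = Finset.univ)
    (F : Fin m → Finset (Fin n))
    (hinj : Function.Injective F)
    (hanti : ∀ i j, i ≠ j → ¬ F i ⊆ F j) :
    ∑ i, (∏ k, ((X k).card.choose (F i ∩ X k).card : ℝ))⁻¹
      ≤ (1 + (n : ℝ) / r) ^ (r - 1) := by
  rcases Nat.eq_zero_or_pos r with hr0 | hrpos
  · -- r = 0 : the cover is empty, so n = 0 and m ≤ 1
    subst hr0
    have hn : (Finset.univ : Finset (Fin n)) = ∅ := by
      rw [← hcover]; simp
    have hm : m ≤ 1 := by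
      by_contra hm
      push_neg at hm
      have h01 : (⟨0, by omega⟩ : Fin m) ≠ ⟨1, by omega⟩ := by
        simp [Fin.ext_iff]
      exact hanti _ _ h01 (by
        intro x hx
        exact absurd (Finset.mem_univ x) (by simp [hn]))
    simp only [Finset.univ_eq_empty, Finset.prod_empty, inv_one, Nat.zero_sub, pow_zero]
    calc ∑ _i : Fin m, (1 : ℝ) = m := by simp
      _ ≤ 1 := by exact_mod_cast hm
  -- now r ≥ 1
  have haX : ∀ (i : Fin m) (k : Fin r), (F i ∩ X k).card ≤ (X k).card :=
    fun i k => Finset.card_le_card Finset.inter_subset_right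
  have hsum : ∑ k, (X k).card = n := by
    have h1 := congrArg Finset.card hcover
    rw [Finset.card_biUnion (fun k _ l _ hkl => hX k l hkl)] at h1
    simpa using h1
  -- pick a part of maximal size
  obtain ⟨j, -, hjmax⟩ := Finset.exists_max_image Finset.univ (fun k => (X k).card)
    (Finset.univ_nonempty_iff.2 ⟨⟨0, hrpos⟩⟩)
  have key := keycount n m r X hcover F hanti j
  -- real-number manipulation
  have hD : (0 : ℝ) < ∏ k, ((X k).card ! : ℝ) :=
    Finset.prod_pos fun k _ => by exact_mod_cast Nat.factorial_pos _
  have hterm : ∀ i, (∏ k, ((X k).card.choose (F i ∩ X k).card : ℝ))⁻¹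
      = (∏ k, (((F i ∩ X k).card ! * ((X k).card - (F i ∩ X k).card) ! : ℕ) : ℝ))
        / ∏ k, ((X k).card ! : ℝ) := by
    intro i
    have hid : (∏ k, ((X k).card.choose (F i ∩ X k).card : ℝ))
        * (∏ k, (((F i ∩ X k).card ! * ((X k).card - (F i ∩ X k).card) ! : ℕ) : ℝ))
        = ∏ k, ((X k).card ! : ℝ) := by
      rw [← Finset.prod_mul_distrib]
      refine Finset.prod_congr rfl fun k _ => ?_
      have := Nat.choose_mul_factorial_mul_factorial (haX i k)
      push_cast [← this]
      ring
    have hC : (∏ k, ((X k).card.choose (F i ∩ X k).card : ℝ)) ≠ 0 :=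
      ne_of_gt (Finset.prod_pos fun k _ => by
        exact_mod_cast Nat.choose_pos (haX i k))
    rw [eq_div_iff hD.ne', ← hid, inv_mul_cancel_left₀ hC]
  rw [Finset.sum_congr rfl fun i _ => hterm i, ← Finset.sum_div]
  set B : ℕ := ∏ k ∈ Finset.univ.erase j, ((X k).card + 1) with hB
  have hstep : (∑ i, ∏ k, (((F i ∩ X k).card ! * ((X k).card - (F i ∩ X k).card) ! : ℕ) : ℝ))
      / ∏ k, ((X k).card ! : ℝ) ≤ (B : ℝ) := by
    rw [div_le_iff₀ hD]
    calc (∑ i, ∏ k, (((F i ∩ X k).card ! * ((X k).card - (F i ∩ X k).card) ! : ℕ) : ℝ))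
        = ((∑ i : Fin m, ∏ k, ((F i ∩ X k).card ! * ((X k).card - (F i ∩ X k).card) !) : ℕ) : ℝ) := by
          push_cast; ring
      _ ≤ (((∏ k, (X k).card !) * B : ℕ) : ℝ) := by exact_mod_cast key
      _ = (B : ℝ) * ∏ k, ((X k).card ! : ℝ) := by push_cast; ring
  refine le_trans hstep ?_
  -- final: B ≤ (1 + n/r)^(r-1)
  have hrR : (0 : ℝ) < r := by exact_mod_cast hrpos
  have hQ : (1 : ℝ) + n / r = ((n : ℝ) + r) / r := by field_simp; ring
  by_cases hr2 : 2 ≤ r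
  case neg =>
    -- r = 1
    have hr1 : r = 1 := by omega
    subst hr1
    have he : Finset.univ.erase j = (∅ : Finset (Fin 1)) := by
      apply Finset.eq_empty_of_forall_notMem
      intro k hk
      exact (Finset.mem_erase.1 hk).1 (Subsingleton.elim k j)
    rw [hB, he]
    simp
  case pos =>
    have hBR : (B : ℝ) = ∏ k ∈ Finset.univ.erase j, (((X k).card : ℝ) + 1) := by
      rw [hB]; push_cast; ring
    have hcard_erase : (Finset.univ.erase j).card = r - 1 := by
      rw [Finset.card_erase_of_mem (Finset.mem_univ j), Finset.card_univ, Fintype.card_fin]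
    have hsumR : ∑ k : Fin r, (((X k).card : ℝ) + 1) = (n : ℝ) + r := by
      rw [Finset.sum_add_distrib, Finset.sum_const, Finset.card_univ, Fintype.card_fin,
        ← Nat.cast_sum, hsum]
      push_cast
      ring
    set M : ℝ := ((X j).card : ℝ) + 1 with hM
    have hMr : M ≤ (n : ℝ) + r := by
      have h1 : (X j).card ≤ n := by
        calc (X j).card ≤ ∑ k : Fin r, (X k).card :=
          Finset.single_le_sum (f := fun k => (X k).card) (fun k _ => Nat.zero_le _) (Finset.mem_univ j)
        _ = n := hsum
      have : ((X j).card : ℝ) ≤ n := by exact_mod_cast h1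
      have hr1 : (1 : ℝ) ≤ r := by exact_mod_cast hrpos
      simp only [hM]
      linarith
    have herase_sum : ∑ k ∈ Finset.univ.erase j, (((X k).card : ℝ) + 1) = (n : ℝ) + r - M := by
      have := Finset.add_sum_erase Finset.univ (fun k => (((X k).card : ℝ) + 1))
        (Finset.mem_univ j)
      rw [hsumR] at this
      simp only [hM]
      linarith
    have hnonneg : ∀ k ∈ Finset.univ.erase j, (0 : ℝ) ≤ ((X k).card : ℝ) + 1 :=
      fun k _ => by positivity
    rcases le_or_gt M (1 + (n : ℝ) / r) with hMQ | hMQ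
    · -- every factor is at most Q
      rw [hBR]
      calc ∏ k ∈ Finset.univ.erase j, (((X k).card : ℝ) + 1)
          ≤ ∏ _k ∈ Finset.univ.erase j, (1 + (n : ℝ) / r) := by
            apply Finset.prod_le_prod hnonneg
            intro k _
            refine le_trans ?_ hMQ
            have := hjmax k (Finset.mem_univ k)
            simp only [hM]
            exact_mod_cast Nat.succ_le_succ this
        _ = (1 + (n : ℝ) / r) ^ (r - 1) := by
            rw [Finset.prod_const, hcard_erase]
    · -- AM-GM
      have hAM := amgm (Finset.univ.erase j) (fun k => (((X k).card : ℝ) + 1)) hnonneg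
      rw [herase_sum, hcard_erase] at hAM
      have hr1R : (0 : ℝ) < (r : ℝ) - 1 := by
        have : (2 : ℝ) ≤ r := by exact_mod_cast hr2
        linarith
      have hcastr : ((r - 1 : ℕ) : ℝ) = (r : ℝ) - 1 := by
        rw [Nat.cast_sub hrpos]; simp
    
      have hAMval : (0 : ℝ) ≤ ((n : ℝ) + r - M) / ((r - 1 : ℕ) : ℝ) := by
        rw [hcastr]
        apply div_nonneg _ (le_of_lt hr1R)
        linarith
      have hAMle : ((n : ℝ) + r - M) / ((r - 1 : ℕ) : ℝ) ≤ 1 + (n : ℝ) / r := by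
        rw [hcastr, hQ, div_le_div_iff₀ hr1R hrR]
        rw [hQ, div_lt_iff₀ hrR] at hMQ
        nlinarith [hMQ]
      rw [hBR]
      calc ∏ k ∈ Finset.univ.erase j, (((X k).card : ℝ) + 1)
          ≤ (((n : ℝ) + r - M) / ((r - 1 : ℕ) : ℝ)) ^ (r - 1) := hAM
        _ ≤ (1 + (n : ℝ) / r) ^ (r - 1) := pow_le_pow_left₀ hAMval hAMle _
end
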